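/- arXiv:2303.03100 — 2 statements merged into one kernel-verified Lean document; each statement's English description precedes it below -/
import Mathlib

section
/- If a sequence of nonnegative reals satisfies q_{k+1} ≤ (1+α_k) q_k + α_k·c for nonnegative stepsizes α_k with Σ_{j=k_1}^{k_2-1} α_j ≤ 1/4, then for all k in [k_1, k_2], q_k + c ≤ (1 + 2·Σ_{j=k_1}^{k-1} α_j)(q_{k_1} + c), using that 1+x ≤ e^x ≤ 1+2x for x ∈ [0,1/2]. -/
/-!
With `Q k := q k + c` the recursion reads `Q (k + 1) ≤ (1 + α k) * Q k`, so `Q k` is at most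
`∏ (1 + α j) * Q k₁ ≤ exp (∑ α j) * Q k₁`, and `exp x ≤ 1 + 2 x` as long as `0 ≤ x ≤ 1`.
-/

open Finset

theorem Real.exp_le_one_add_two_mul {x : ℝ} (hx₀ : 0 ≤ x) (hx₁ : x ≤ 1) :
    Real.exp x ≤ 1 + 2 * x := by
  calc Real.exp x ≤ (2 + x) / (2 - x) := Real.exp_le_two_add_div_two_sub hx₀ (by linarith)
    _ ≤ 1 + 2 * x := by
      rw [div_le_iff₀ (by linarith)]
      nlinarith

theorem le_prod_Ico_mul_of_succ_le_mul {R : Type*} [CommSemiring R] [PartialOrder R]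
    [IsOrderedRing R] {Q r : ℕ → R} {k₁ k₂ : ℕ} (hr : ∀ k, 0 ≤ r k)
    (hQ : ∀ k, k₁ ≤ k → k < k₂ → Q (k + 1) ≤ r k * Q k) :
    ∀ k, k₁ ≤ k → k ≤ k₂ → Q k ≤ (∏ j ∈ Ico k₁ k, r j) * Q k₁ := by
  intro k hk
  induction k, hk using Nat.le_induction with
  | base => simp
  | succ k hk ih =>
    intro hk₂
    calc Q (k + 1) ≤ r k * Q k := hQ k hk hk₂
      _ ≤ r k * ((∏ j ∈ Ico k₁ k, r j) * Q k₁) :=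
        mul_le_mul_of_nonneg_left (ih (Nat.le_of_succ_le hk₂)) (hr k)
      _ = (∏ j ∈ Ico k₁ (k + 1), r j) * Q k₁ := by rw [prod_Ico_succ_top hk]; ring

theorem seq_growth_bound (c : ℝ) (hc : 0 ≤ c) (q α : ℕ → ℝ)
    (hq : ∀ k, 0 ≤ q k) (hα : ∀ k, 0 ≤ α k) (k₁ k₂ : ℕ)
    (hrec : ∀ k, k₁ ≤ k → k < k₂ → q (k + 1) ≤ (1 + α k) * q k + α k * c)
    (hsum : ∑ j ∈ Finset.Ico k₁ k₂, α j ≤ 1 / 4) :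
    ∀ k, k₁ ≤ k → k ≤ k₂ →
      q k + c ≤ (1 + 2 * ∑ j ∈ Finset.Ico k₁ k, α j) * (q k₁ + c) := by
  intro k hk₁ hk₂
  have hQ₁ : 0 ≤ q k₁ + c := add_nonneg (hq k₁) hc
  have hS₀ : 0 ≤ ∑ j ∈ Ico k₁ k, α j := sum_nonneg fun j _ ↦ hα j
  have hS₁ : ∑ j ∈ Ico k₁ k, α j ≤ 1 :=
    calc ∑ j ∈ Ico k₁ k, α j ≤ ∑ j ∈ Ico k₁ k₂, α j :=
          sum_le_sum_of_subset_of_nonneg (Ico_subset_Ico_right hk₂) fun j _ _ ↦ hα j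
      _ ≤ 1 := by linarith
  have hstep : ∀ j, k₁ ≤ j → j < k₂ → q (j + 1) + c ≤ (1 + α j) * (q j + c) := by
    intro j hj₁ hj₂
    linarith [hrec j hj₁ hj₂]
  calc q k + c ≤ (∏ j ∈ Ico k₁ k, (1 + α j)) * (q k₁ + c) :=
        le_prod_Ico_mul_of_succ_le_mul (Q := fun j ↦ q j + c)
          (fun j ↦ add_nonneg zero_le_one (hα j)) hstep k hk₁ hk₂
    _ ≤ Real.exp (∑ j ∈ Ico k₁ k, α j) * (q k₁ + c) := by
        gcongr; exact Real.prod_one_add_le_exp_sum _ hα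
    _ ≤ (1 + 2 * ∑ j ∈ Ico k₁ k, α j) * (q k₁ + c) := by
        gcongr; exact Real.exp_le_one_add_two_mul hS₀ hS₁
end

section
/- For matrices X_i ∈ R^{m×n}, X_{-i} ∈ R^{n×m} and probability vectors μ^i ∈ Δ^m, μ^{-i} ∈ Δ^n, the function V_X(μ^i,μ^{-i}) = Σ_{i} max_{μ̂^i}{(μ̂^i − μ^i)ᵀ X_i μ^{-i} + τν(μ̂^i) − τν(μ^i)} satisfies ‖σ_τ(X_i μ^{-i}) − μ^i‖_2² + ‖σ_τ(X_{-i} μ^i) − μ^{-i}‖_2² ≤ (2/τ) V_X(μ^i, μ^{-i}). -/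
/-!
For `p = σ_τ(c)` one has `c = τ log p + const`, so the regularised gap at the maximiser `p` is
`τ · KL(μ ‖ p)`. Since `x log x - x² / 2` is convex on `[0, 1]`, `KL(μ ‖ p) ≥ ‖μ - p‖₂² / 2` on the
simplex. Bounding each supremum below by its value at `p` gives the two summands separately.
-/

/-- Entropy of a distribution. -/
noncomputable def entropyFn {n : Type*} [Fintype n] (μ : n → ℝ) : ℝ :=
  -∑ a, μ a * Real.log (μ a)

/-- Softmax with temperature `τ`. -/
noncomputable def softmaxτ {n : Type*} [Fintype n] (τ : ℝ) (x : n → ℝ) : n → ℝ :=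
  fun a => Real.exp (x a / τ) / ∑ b, Real.exp (x b / τ)

open Real Set Finset

theorem ConvexOn.add_mul_sub_le_of_hasDerivAt {S : Set ℝ} {f : ℝ → ℝ} {f' x y : ℝ}
    (hf : ConvexOn ℝ S f) (hx : x ∈ S) (hy : y ∈ S) (hf' : HasDerivAt f f' y) :
    f y + f' * (x - y) ≤ f x := by
  rcases lt_trichotomy x y with hxy | rfl | hxy
  · have h := hf.slope_le_of_hasDerivAt hx hy hxy hf'
    rw [slope_def_field, div_le_iff₀ (sub_pos.2 hxy)] at h
    linarith
  · simp
  · have h := hf.le_slope_of_hasDerivAt hy hx hxy hf'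
    rw [slope_def_field, le_div_iff₀ (sub_pos.2 hxy)] at h
    linarith

theorem convexOn_mul_log_sub_sq_div_two :
    ConvexOn ℝ (Icc 0 1) fun x : ℝ => x * log x - x ^ 2 / 2 := by
  refine convexOn_of_hasDerivWithinAt2_nonneg (convex_Icc 0 1)
    (f' := fun x => log x + 1 - x) (f'' := fun x => x⁻¹ - 1)
    ((continuous_mul_log.sub (by fun_prop)).continuousOn) ?_ ?_ ?_ <;>
    rw [interior_Icc] <;> rintro x ⟨hx0, hx1⟩
  · exact ((hasDerivAt_mul_log hx0.ne').sub
      ((hasDerivAt_pow 2 x).div_const 2)).hasDerivWithinAt.congr_deriv (by ring)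
  · exact (((hasDerivAt_log hx0.ne').add_const 1).sub
      (hasDerivAt_id x)).hasDerivWithinAt
  · exact sub_nonneg.2 (one_le_inv₀ hx0 |>.2 hx1.le)

/-- The strong convexity of `x log x` on `[0, 1]`, in the form of a Bregman divergence bound. -/
theorem sub_add_sq_div_two_le_mul_log_sub {x y : ℝ} (hx : x ∈ Icc (0 : ℝ) 1)
    (hy : y ∈ Ioc (0 : ℝ) 1) :
    (x - y) + (x - y) ^ 2 / 2 ≤ x * log x - x * log y := by
  have h := convexOn_mul_log_sub_sq_div_two.add_mul_sub_le_of_hasDerivAt hx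
    (Ioc_subset_Icc_self hy)
    ((hasDerivAt_mul_log hy.1.ne').sub ((hasDerivAt_pow 2 y).div_const 2))
  linear_combination h

theorem sum_sq_sub_div_two_le_sum_mul_log_sub {k : Type*} [Fintype k] {μ p : k → ℝ}
    (hμ : μ ∈ stdSimplex ℝ k) (hp : p ∈ stdSimplex ℝ k) (hp0 : ∀ a, 0 < p a) :
    (∑ a, (p a - μ a) ^ 2) / 2 ≤ ∑ a, (μ a * log (μ a) - μ a * log (p a)) := by
  have hsum : ∑ a, (μ a - p a) = 0 := by rw [sum_sub_distrib, hμ.2, hp.2, sub_self]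
  calc (∑ a, (p a - μ a) ^ 2) / 2 = ∑ a, ((μ a - p a) + (μ a - p a) ^ 2 / 2) := by
        rw [sum_add_distrib, hsum, zero_add, sum_div]
        exact sum_congr rfl fun a _ => by ring
    _ ≤ _ := sum_le_sum fun a _ => sub_add_sq_div_two_le_mul_log_sub
        (mem_Icc_of_mem_stdSimplex hμ a) ⟨hp0 a, (mem_Icc_of_mem_stdSimplex hp a).2⟩

section Softmax

variable {k : Type*} [Fintype k] [Nonempty k]

theorem sum_exp_div_pos (τ : ℝ) (c : k → ℝ) : 0 < ∑ b, exp (c b / τ) :=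
  sum_pos (fun _ _ => exp_pos _) univ_nonempty

theorem softmaxτ_pos (τ : ℝ) (c : k → ℝ) (a : k) : 0 < softmaxτ τ c a :=
  div_pos (exp_pos _) (sum_exp_div_pos τ c)

theorem softmaxτ_mem_stdSimplex (τ : ℝ) (c : k → ℝ) : softmaxτ τ c ∈ stdSimplex ℝ k :=
  ⟨fun a => (softmaxτ_pos τ c a).le, by
    simp only [softmaxτ, ← sum_div]
    exact div_self (sum_exp_div_pos τ c).ne'⟩

theorem eq_mul_log_softmaxτ_add {τ : ℝ} (hτ : 0 < τ) (c : k → ℝ) (a : k) :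
    c a = τ * log (softmaxτ τ c a) + τ * log (∑ b, exp (c b / τ)) := by
  rw [softmaxτ, log_div (exp_ne_zero _) (sum_exp_div_pos τ c).ne', log_exp]
  field_simp
  ring

/-- Gibbs' variational identity: the gap of the entropy-regularised best response is `τ` times
the Kullback–Leibler divergence from the softmax. -/
theorem entropy_gap_softmaxτ {τ : ℝ} (hτ : 0 < τ) (c : k → ℝ) {μ : k → ℝ}
    (hμ : μ ∈ stdSimplex ℝ k) :
    (∑ a, (softmaxτ τ c a - μ a) * c a) + τ * entropyFn (softmaxτ τ c) - τ * entropyFn μ =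
      τ * ∑ a, (μ a * log (μ a) - μ a * log (softmaxτ τ c a)) := by
  set p := softmaxτ τ c
  set L := log (∑ b, exp (c b / τ))
  have hmass : ∑ a, (p a - μ a) = 0 := by
    rw [sum_sub_distrib, (softmaxτ_mem_stdSimplex τ c).2, hμ.2, sub_self]
  have hexpand : ∑ a, (p a - μ a) * c a =
      τ * ∑ a, (p a - μ a) * log (p a) + τ * L * ∑ a, (p a - μ a) := by
    simp only [mul_sum, ← sum_add_distrib]
    exact sum_congr rfl fun a _ => by rw [eq_mul_log_softmaxτ_add hτ c a]; ring
  rw [hexpand, hmass, entropyFn, entropyFn]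
  simp only [mul_zero, add_zero, mul_sum, ← sum_neg_distrib, ← sum_add_distrib, ← sum_sub_distrib]
  exact sum_congr rfl fun a _ => by ring

end Softmax

theorem continuous_entropyFn {k : Type*} [Fintype k] : Continuous (entropyFn : (k → ℝ) → ℝ) :=
  (continuous_finsetSum _ fun a _ => continuous_mul_log.comp (continuous_apply a)).neg

theorem bddAbove_range_entropy_gap {k : Type*} [Fintype k] (τ : ℝ) (c μ : k → ℝ) :
    BddAbove (range fun ν : stdSimplex ℝ k =>
      (∑ a, ((ν : k → ℝ) a - μ a) * c a) + τ * entropyFn (ν : k → ℝ) - τ * entropyFn μ) := by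
  have : CompactSpace (stdSimplex ℝ k) := isCompact_iff_compactSpace.mp (isCompact_stdSimplex ℝ k)
  refine (isCompact_range (Continuous.sub (Continuous.add ?_ ?_) continuous_const)).bddAbove
  · exact continuous_finsetSum _ fun a _ =>
      (((continuous_apply a).comp continuous_subtype_val).sub continuous_const).mul
        continuous_const
  · exact continuous_const.mul (continuous_entropyFn.comp continuous_subtype_val)

theorem sum_sq_softmaxτ_sub_le {k : Type*} [Fintype k] [Nonempty k] {τ : ℝ} (hτ : 0 < τ)
    (c : k → ℝ) {μ : k → ℝ} (hμ : μ ∈ stdSimplex ℝ k) :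
    ∑ a, (softmaxτ τ c a - μ a) ^ 2 ≤ (2 / τ) *
      ⨆ ν : stdSimplex ℝ k, ((∑ a, ((ν : k → ℝ) a - μ a) * c a) +
        τ * entropyFn (ν : k → ℝ) - τ * entropyFn μ) := by
  have hgap := entropy_gap_softmaxτ hτ c hμ
  have hkl := sum_sq_sub_div_two_le_sum_mul_log_sub hμ (softmaxτ_mem_stdSimplex τ c)
    (softmaxτ_pos τ c)
  calc ∑ a, (softmaxτ τ c a - μ a) ^ 2
      ≤ (2 / τ) * ((∑ a, (softmaxτ τ c a - μ a) * c a) + τ * entropyFn (softmaxτ τ c) -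
          τ * entropyFn μ) := by
        rw [hgap, ← mul_assoc, div_mul_cancel₀ 2 hτ.ne']
        linarith
    _ ≤ _ := by
        gcongr
        exact le_ciSup (bddAbove_range_entropy_gap τ c μ) ⟨_, softmaxτ_mem_stdSimplex τ c⟩

theorem lyapunov_quadratic_growth {m n : Type*} [Fintype m] [Fintype n]
    [Nonempty m] [Nonempty n] (τ : ℝ) (hτ : 0 < τ)
    (Xi : m → n → ℝ) (Xmi : n → m → ℝ)
    (μi : m → ℝ) (μmi : n → ℝ)
    (hμi : μi ∈ stdSimplex ℝ m) (hμmi : μmi ∈ stdSimplex ℝ n) :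
    (∑ a, (softmaxτ τ (fun a => ∑ b, Xi a b * μmi b) a - μi a) ^ 2) +
      (∑ b, (softmaxτ τ (fun b => ∑ a, Xmi b a * μi a) b - μmi b) ^ 2) ≤
    (2 / τ) *
      ((⨆ ν : stdSimplex ℝ m,
          ((∑ a, ((ν : m → ℝ) a - μi a) * ∑ b, Xi a b * μmi b) +
            τ * entropyFn (ν : m → ℝ) - τ * entropyFn μi)) +
        (⨆ ν : stdSimplex ℝ n,
          ((∑ b, ((ν : n → ℝ) b - μmi b) * ∑ a, Xmi b a * μi a) +
            τ * entropyFn (ν : n → ℝ) - τ * entropyFn μmi))) := by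
  rw [mul_add]
  exact add_le_add (sum_sq_softmaxτ_sub_le hτ _ hμi) (sum_sq_softmaxτ_sub_le hτ _ hμmi)
end
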